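/- arXiv:2006.05078 — 2 statements merged into one kernel-verified Lean document; each statement's English description precedes it below -/
import Mathlib

section
/- Let M ≥ 1, r ∈ ℝ^M, P ⊂ ℝ^M finite, and let D(P, r) = ⋃_{p ∈ P} [r, p] denote the dominated region. Suppose S_1, …, S_K with S_k = Ico(l_k, u_k), l_k, u_k ∈ ℝ^M, are pairwise disjoint boxes such that each S_k ⊆ {y : r ≤ y} and S_k ∩ D(P, r) = ∅. Let f_1, …, f_q ∈ ℝ^M and set A_i = ({y : r ≤ y ≤ f_i}) \ D(P, r); assume ⋃_{i=1}^q A_i ⊆ ⋃_{k=1}^K S_k. Then λ_M(⋃_{i=1}^q A_i) = Σ_{k=1}^K Σ_{j=1}^q Σ_{∅ ≠ J ⊆ {1,…,q}, |J| = j} (−1)^{j+1} ∏_{m=1}^M [z_{k,J}^{(m)} − l_k^{(m)}]_+, where z_{k,J}^{(m)} = min(u_k^{(m)}, min_{i ∈ J} f_i^{(m)}). -/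
/-! The disjoint boxes `S k` cover `⋃ i, A i`, so its measure is the sum over `k` of the measures
of the pieces `S k ∩ ⋃ i, A i`. As `S k` lies above `r` and misses the dominated region, `A i` is
cut out of `S k` by the single constraint `y ≤ f i`. Inclusion–exclusion then expresses the measure
of a piece through the sets `S k ∩ Iic (⨅ i ∈ J, f i)`, each again a box, of volume
`∏ m, [min (u k m) (⨅ i ∈ J, f i m) - l k m]_+`. -/

open MeasureTheory Function

theorem Real.volume_real_Ico_inter_Iic (a b c : ℝ) :
    volume.real (Set.Ico a b ∩ Set.Iic c) = max (min b c - a) 0 := by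
  rcases le_or_gt b c with hbc | hcb
  · rw [Set.inter_eq_left.2 fun x hx => hx.2.le.trans hbc, min_eq_left hbc, Real.volume_real_Ico]
  · have hIcc : Set.Ico a b ∩ Set.Iic c = Set.Icc a c :=
      Set.ext fun x => ⟨fun h => ⟨h.1.1, h.2⟩, fun h => ⟨⟨h.1, h.2.trans_lt hcb⟩, h.2⟩⟩
    rw [hIcc, min_eq_right hcb.le, Real.volume_real_Icc]

theorem Set.biInter_Iic_eq_Iic_ciInf {κ ι α : Type*} [ConditionallyCompleteLattice α]
    {J : Finset κ} (hJ : J.Nonempty) (f : κ → ι → α) :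
    ⋂ i ∈ J, Set.Iic (f i) = Set.Iic fun m => ⨅ i : J, f i m := by
  have : Nonempty J := hJ.to_subtype
  ext y
  simp only [Set.mem_iInter, Set.mem_Iic, Pi.le_def,
    le_ciInf_iff (Set.finite_range _).bddBelow, Subtype.forall]
  exact ⟨fun h m i hi => h i hi m, fun h i hi m => h m i hi⟩

theorem Finset.sum_powerset_filter_nonempty {α β : Type*} [AddCommMonoid β] (s : Finset α)
    (g : Finset α → β) :
    ∑ t ∈ s.powerset with t.Nonempty, g t =
      ∑ j ∈ Finset.Icc 1 s.card, ∑ t ∈ Finset.powersetCard j s, g t := by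
  classical
  rw [← Finset.sum_biUnion fun i _ j _ hij => Finset.pairwise_disjoint_powersetCard s hij]
  congr 1
  ext t
  simp only [Finset.mem_filter, Finset.mem_powerset, Finset.mem_biUnion, Finset.mem_Icc,
    Finset.mem_powersetCard, ← Finset.card_pos]
  exact ⟨fun ⟨hts, hpos⟩ => ⟨t.card, ⟨hpos, Finset.card_le_card hts⟩, hts, rfl⟩,
    fun ⟨_, ⟨hpos, _⟩, hts, hcard⟩ => ⟨hts, hcard ▸ hpos⟩⟩

theorem MeasureTheory.measureReal_eq_sum_inter_of_subset_iUnion {X ι : Type*} [MeasurableSpace X]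
    [Fintype ι] {μ : Measure X} {s : ι → Set X} (hs : ∀ i, MeasurableSet (s i))
    (hd : Pairwise (Disjoint on s)) {t : Set X} (ht : t ⊆ ⋃ i, s i) (hμt : μ t ≠ ⊤) :
    μ.real t = ∑ i, μ.real (s i ∩ t) := by
  have hfin : ∀ i, μ.restrict t (s i) ≠ ⊤ := fun i =>
    ne_top_of_le_ne_top (by rwa [Measure.restrict_apply_univ]) (measure_mono (Set.subset_univ _))
  calc μ.real t = (μ.restrict t).real (⋃ i, s i) := by
        rw [measureReal_restrict_apply (MeasurableSet.iUnion hs), Set.inter_eq_right.2 ht]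
    _ = ∑ i, (μ.restrict t).real (s i) := measureReal_iUnion_fintype hd hs hfin
    _ = ∑ i, μ.real (s i ∩ t) := by simp only [measureReal_restrict_apply (hs _)]

theorem Set.inter_Icc_diff_eq_inter_Iic {α : Type*} [Preorder α] {S D : Set α} {r b : α}
    (hS : S ⊆ Set.Ici r) (hD : Disjoint S D) : S ∩ (Set.Icc r b \ D) = S ∩ Set.Iic b := by
  ext y
  simp only [Set.mem_inter_iff, Set.mem_sdiff, Set.mem_Icc, Set.mem_Iic]
  exact ⟨fun h => ⟨h.1, h.2.1.2⟩, fun h => ⟨h.1, ⟨hS h.1, h.2⟩, hD.notMem_of_mem_left h.1⟩⟩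

theorem Real.volume_real_pi_Ico_inter_Iic {ι : Type*} [Fintype ι] (l u w : ι → ℝ) :
    volume.real ((Set.univ.pi fun m => Set.Ico (l m) (u m)) ∩ Set.Iic w) =
      ∏ m, max (min (u m) (w m) - l m) 0 := by
  rw [← Set.pi_univ_Iic, ← Set.pi_inter_distrib, measureReal_def, volume_pi_pi,
    ENNReal.toReal_prod]
  simp_rw [← measureReal_def, Real.volume_real_Ico_inter_Iic]

theorem Real.volume_real_iUnion_pi_Ico_inter_Iic {ι : Type*} [Fintype ι] {q : ℕ} (l u : ι → ℝ)
    (f : Fin q → ι → ℝ) :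
    volume.real (⋃ i, (Set.univ.pi fun m => Set.Ico (l m) (u m)) ∩ Set.Iic (f i)) =
      ∑ j ∈ Finset.Icc 1 q, ∑ J ∈ Finset.powersetCard j Finset.univ,
        (-1 : ℝ) ^ (j + 1) * ∏ m, max (min (u m) (⨅ i : {x // x ∈ J}, f i.1 m) - l m) 0 := by
  set B := Set.univ.pi fun m => Set.Ico (l m) (u m)
  have hB : MeasurableSet B := MeasurableSet.univ_pi fun m => measurableSet_Ico
  have hfin : ∀ i, volume (B ∩ Set.Iic (f i)) ≠ ⊤ := fun i =>
    ne_top_of_le_ne_top (by simp [B, volume_pi_pi, ENNReal.prod_ne_top])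
      (measure_mono Set.inter_subset_left)
  rw [show (⋃ i, B ∩ Set.Iic (f i)) = ⋃ i ∈ Finset.univ, B ∩ Set.Iic (f i) by simp,
    measureReal_biUnion_eq_sum_powerset
      (fun i _ => hB.inter measurableSet_Iic) (fun i _ => hfin i),
    Finset.sum_powerset_filter_nonempty, Finset.card_univ, Fintype.card_fin]
  refine Finset.sum_congr rfl fun j hj => Finset.sum_congr rfl fun J hJ => ?_
  obtain ⟨-, rfl⟩ := Finset.mem_powersetCard.1 hJ
  have hJne : J.Nonempty := Finset.card_pos.1 (Finset.mem_Icc.1 hj).1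
  rw [← Finset.set_biInter_coe, Set.inter_biInter hJne.to_set, Finset.set_biInter_coe,
    Set.biInter_Iic_eq_Iic_ciInf hJne, volume_real_pi_Ico_inter_Iic]

theorem qhvi_box_decomposition_general (M : ℕ) (r : Fin M → ℝ)
    (P : Finset (Fin M → ℝ))
    (K : ℕ) (l u : Fin K → Fin M → ℝ) (S : Fin K → Set (Fin M → ℝ))
    (hS : ∀ k, S k = Set.univ.pi fun m => Set.Ico (l k m) (u k m))
    (hdisj : Pairwise (Function.onFun Disjoint S))
    (hsub : ∀ k, S k ⊆ Set.Ici r)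
    (hnd : ∀ k, S k ∩ (⋃ p ∈ P, Set.Icc r p) = ∅)
    (q : ℕ) (f : Fin q → Fin M → ℝ) (A : Fin q → Set (Fin M → ℝ))
    (hA : ∀ i, A i = Set.Icc r (f i) \ ⋃ p ∈ P, Set.Icc r p)
    (hcover : (⋃ i, A i) ⊆ ⋃ k, S k) :
    (volume (⋃ i, A i)).toReal =
      ∑ k, ∑ j ∈ Finset.Icc 1 q,
        ∑ J ∈ Finset.powersetCard j (Finset.univ : Finset (Fin q)),
          (-1 : ℝ) ^ (j + 1) *
            ∏ m, max (min (u k m) (⨅ i : {x // x ∈ J}, f i.1 m) - l k m) 0 := by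
  have hSm : ∀ k, MeasurableSet (S k) := fun k => by
    rw [hS k]; exact MeasurableSet.univ_pi fun m => measurableSet_Ico
  have hfin : volume (⋃ i, A i) ≠ ⊤ :=
    ne_top_of_le_ne_top (isCompact_iUnion fun i => isCompact_Icc).measure_ne_top
      (measure_mono (Set.iUnion_mono fun i => (hA i).trans_subset Set.sdiff_subset))
  have hpiece : ∀ k, S k ∩ ⋃ i, A i = ⋃ i, S k ∩ Set.Iic (f i) := fun k => by
    simp only [Set.inter_iUnion, hA,
      Set.inter_Icc_diff_eq_inter_Iic (hsub k) (Set.disjoint_iff_inter_eq_empty.2 (hnd k))]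
  rw [← measureReal_def, measureReal_eq_sum_inter_of_subset_iUnion hSm hdisj hcover hfin]
  refine Finset.sum_congr rfl fun k _ => ?_
  rw [hpiece, hS, Real.volume_real_iUnion_pi_Ico_inter_Iic]

/-- Equation (3) of the paper: the joint hypervolume improvement of `q` new objective vectors
`f_1, …, f_q`, i.e. the Lebesgue measure of `⋃_i A_i` where
`A_i = {y : r ≤ y ≤ f_i} \ D(P, r)`, computed via the inclusion–exclusion principle over a
box decomposition `{S_k}` of the non-dominated space:
`λ_M(⋃ A_i) = ∑_k ∑_{j=1}^q ∑_{|J|=j} (−1)^{j+1} ∏_m [z_{k,J}^(m) − l_k^(m)]_+` with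
`z_{k,J}^(m) = min(u_k^(m), min_{i ∈ J} f_i^(m))`. -/
theorem qhvi_box_decomposition (M : ℕ) (hM : 1 ≤ M) (r : Fin M → ℝ)
    (P : Finset (Fin M → ℝ))
    (K : ℕ) (l u : Fin K → Fin M → ℝ) (S : Fin K → Set (Fin M → ℝ))
    (hS : ∀ k, S k = Set.univ.pi fun m => Set.Ico (l k m) (u k m))
    (hdisj : Pairwise (Function.onFun Disjoint S))
    (hsub : ∀ k, S k ⊆ Set.Ici r)
    (hnd : ∀ k, S k ∩ (⋃ p ∈ P, Set.Icc r p) = ∅)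
    (q : ℕ) (f : Fin q → Fin M → ℝ) (A : Fin q → Set (Fin M → ℝ))
    (hA : ∀ i, A i = Set.Icc r (f i) \ ⋃ p ∈ P, Set.Icc r p)
    (hcover : (⋃ i, A i) ⊆ ⋃ k, S k) :
    (volume (⋃ i, A i)).toReal =
      ∑ k, ∑ j ∈ Finset.Icc 1 q,
        ∑ J ∈ Finset.powersetCard j (Finset.univ : Finset (Fin q)),
          (-1 : ℝ) ^ (j + 1) *
            ∏ m, max (min (u k m) (⨅ i : {x // x ∈ J}, f i.1 m) - l k m) 0 :=
  qhvi_box_decomposition_general M r P K l u S hS hdisj hsub hnd q f A hA hcover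
end

section
/- Let M, V, K, q ≥ 1. For k = 1, …, K let l_k, u_k ∈ ℝ^M, and let f_1, …, f_q ∈ ℝ^M and c_1, …, c_q ∈ ℝ^V. For a nonempty J ⊆ {1,…,q} define z_{k,J}^{(m)} = min(u_k^{(m)}, min_{i ∈ J} f_i^{(m)}) for m = 1, …, M, and z_{k,J}^{(M+v)} = min(1, min_{i ∈ J} 𝟙[c_i^{(v)} ≥ 0]) for v = 1, …, V; define the augmented lower vertex l'_k ∈ ℝ^{M+V} by l'^{(m)}_k = l_k^{(m)} for m ≤ M and l'^{(M+v)}_k = 0 for v = 1, …, V. Then Σ_{k=1}^K Σ_{∅ ≠ J ⊆ {1,…,q}} (−1)^{|J|+1} (∏_{m=1}^M [z_{k,J}^{(m)} − l_k^{(m)}]_+) · ∏_{i ∈ J} ∏_{v=1}^V 𝟙[c_i^{(v)} ≥ 0] = Σ_{k=1}^K Σ_{∅ ≠ J ⊆ {1,…,q}} (−1)^{|J|+1} ∏_{m=1}^{M+V} [z_{k,J}^{(m)} − l'^{(m)}_k]_+. -/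
open Finset

/-- Theorem 1 of the paper: the inclusion–exclusion box-decomposition formula for the
constrained hypervolume improvement, in which each subset's contribution is weighted by the
product of feasibility indicators, equals the corresponding unconstrained formula in the
augmented `(M+V)`-dimensional objective space where the indicators of the `V` constraint
slacks are treated as additional objective components with lower bounds `0` and
upper bounds `1`. -/
theorem constrained_hvi_eq_augmented_hvi (M V K q : ℕ)
    (hM : 1 ≤ M) (hV : 1 ≤ V) (hK : 1 ≤ K) (hq : 1 ≤ q)
    (l u : Fin K → Fin M → ℝ) (f : Fin q → Fin M → ℝ) (c : Fin q → Fin V → ℝ) :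
    ∑ k, ∑ J ∈ Finset.univ.powerset.filter (fun J : Finset (Fin q) => J.Nonempty),
        (-1 : ℝ) ^ (J.card + 1) *
          (∏ m, max (min (u k m) (⨅ i : {x // x ∈ J}, f i.1 m) - l k m) 0) *
          ∏ i ∈ J, ∏ v, (if 0 ≤ c i v then (1 : ℝ) else 0) =
      ∑ k, ∑ J ∈ Finset.univ.powerset.filter (fun J : Finset (Fin q) => J.Nonempty),
        (-1 : ℝ) ^ (J.card + 1) *
          ∏ m : Fin (M + V),
            max (Fin.append
                  (fun m' => min (u k m') (⨅ i : {x // x ∈ J}, f i.1 m'))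
                  (fun v' => min 1 (⨅ i : {x // x ∈ J},
                    if 0 ≤ c i.1 v' then (1 : ℝ) else 0)) m -
                Fin.append (l k) (fun _ : Fin V => (0 : ℝ)) m) 0 := by
  refine Finset.sum_congr rfl fun k _ => Finset.sum_congr rfl fun J hJ => ?_
  have hJne : J.Nonempty := (Finset.mem_filter.mp hJ).2
  haveI : Nonempty {x // x ∈ J} := hJne.to_subtype
  rw [Fin.prod_univ_add]
  simp only [Fin.append_left, Fin.append_right]
  have key : ∀ v : Fin V,
      (⨅ i : {x // x ∈ J}, if 0 ≤ c i.1 v then (1 : ℝ) else 0) =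
        if ∀ i ∈ J, 0 ≤ c i v then 1 else 0 := by
    intro v
    by_cases h : ∀ i ∈ J, 0 ≤ c i v
    · rw [if_pos h]
      have : (fun i : {x // x ∈ J} => if 0 ≤ c i.1 v then (1 : ℝ) else 0) =
          fun _ => (1 : ℝ) := by
        funext i; rw [if_pos (h i.1 i.2)]
      rw [this, ciInf_const]
    · push_neg at h
      obtain ⟨i, hi, hci⟩ := h
      have hci' : ¬ 0 ≤ c i v := not_le.mpr hci
      rw [if_neg (fun hh => hci' (hh i hi))]
      apply le_antisymm
      · have := ciInf_le (f := fun j : {x // x ∈ J} => if 0 ≤ c j.1 v then (1 : ℝ) else 0)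
          (Set.Finite.bddBelow (Set.finite_range _)) (⟨i, hi⟩ : {x // x ∈ J})
        simpa [hci'] using this
      · exact le_ciInf fun j => by positivity
  have hright : (∏ v : Fin V,
      max (min 1 (⨅ i : {x // x ∈ J}, if 0 ≤ c i.1 v then (1 : ℝ) else 0) - 0) 0) =
      ∏ i ∈ J, ∏ v, (if 0 ≤ c i v then (1 : ℝ) else 0) := by
    rw [Finset.prod_comm]
    refine Finset.prod_congr rfl fun v _ => ?_
    rw [key v, Finset.prod_boole]
    by_cases h : ∀ i ∈ J, 0 ≤ c i v
    · simp only [if_pos h]; norm_num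
    · rw [if_neg h, if_neg h]; norm_num
  rw [hright]; ring
end
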